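/- arXiv:1710.04463 — 4 statements merged into one kernel-verified Lean document; each statement's English description precedes it below -/
import Mathlib

section
/- Let z = e^{4πi/5} and φ = (1-√5)/2. The 4×4 Hermitian matrix with ones on the diagonal, H_{12} = H_{23} = 1/(z-1), H_{34} = φ/(z-1), and all other off-diagonal entries zero (Hermitian symmetric) is positive definite. -/
open Matrix
open scoped ComplexOrder

/-!
A Hermitian tridiagonal matrix with unit diagonal factors as `Uᴴ D U` with `U` unit upper
bidiagonal and `D` the diagonal of pivots, the ratios of consecutive leading principal minors;
so it is positive definite as soon as these minors are positive. Here `‖1/(z-1)‖² = (5-√5)/10`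
because `‖z-1‖² = 2 - 2 cos(4π/5)`, and the minors are `1, (5+√5)/10, √5/5, 3(√5-1)/10`.
-/

variable {𝕜 : Type*} [RCLike 𝕜]

def unitHermTridiag4 (a b c : 𝕜) : Matrix (Fin 4) (Fin 4) 𝕜 :=
  !![1, a, 0, 0;
     starRingEnd 𝕜 a, 1, b, 0;
     0, starRingEnd 𝕜 b, 1, c;
     0, 0, starRingEnd 𝕜 c, 1]

def unitUpperBidiag4 (a b c : 𝕜) : Matrix (Fin 4) (Fin 4) 𝕜 :=
  !![1, a, 0, 0;
     0, 1, b, 0;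
     0, 0, 1, c;
     0, 0, 0, 1]

theorem isUnit_unitUpperBidiag4 (a b c : 𝕜) : IsUnit (unitUpperBidiag4 a b c) := by
  rw [isUnit_iff_isUnit_det]
  simp [unitUpperBidiag4, det_succ_row_zero, Fin.sum_univ_succ]

theorem unitHermTridiag4_eq_conjTranspose_mul_diagonal_mul (a b c : 𝕜) {p₂ p₃ p₄ : ℝ}
    (hp₂ : p₂ ≠ 0) (hp₃ : p₃ ≠ 0)
    (h₂ : p₂ = 1 - ‖a‖ ^ 2) (h₃ : p₂ * p₃ = p₂ - ‖b‖ ^ 2) (h₄ : p₃ * p₄ = p₃ - ‖c‖ ^ 2) :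
    unitHermTridiag4 a b c =
      (unitUpperBidiag4 a (b / p₂) (c / p₃))ᴴ *
        diagonal (fun i => ((![1, p₂, p₃, p₄] i : ℝ) : 𝕜)) *
        unitUpperBidiag4 a (b / p₂) (c / p₃) := by
  have hp₂' : (p₂ : 𝕜) ≠ 0 := RCLike.ofReal_ne_zero.2 hp₂
  have hp₃' : (p₃ : 𝕜) ≠ 0 := RCLike.ofReal_ne_zero.2 hp₃
  ext i j
  fin_cases i <;> fin_cases j <;>
    simp [unitHermTridiag4, unitUpperBidiag4, mul_apply, Fin.sum_univ_four, conjTranspose_apply,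
      RCLike.conj_mul] <;>
    field_simp
  all_goals (try rw [RCLike.conj_mul]); norm_cast; linarith

theorem posDef_unitHermTridiag4 (a b c : 𝕜)
    (h₂ : 0 < 1 - ‖a‖ ^ 2) (h₃ : 0 < 1 - ‖a‖ ^ 2 - ‖b‖ ^ 2)
    (h₄ : 0 < 1 - ‖a‖ ^ 2 - ‖b‖ ^ 2 - ‖c‖ ^ 2 * (1 - ‖a‖ ^ 2)) :
    (unitHermTridiag4 a b c).PosDef := by
  set m₂ := 1 - ‖a‖ ^ 2
  set m₃ := 1 - ‖a‖ ^ 2 - ‖b‖ ^ 2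
  set m₄ := 1 - ‖a‖ ^ 2 - ‖b‖ ^ 2 - ‖c‖ ^ 2 * (1 - ‖a‖ ^ 2)
  rw [unitHermTridiag4_eq_conjTranspose_mul_diagonal_mul a b c (p₃ := m₃ / m₂) (p₄ := m₄ / m₃)
    h₂.ne' (by positivity) rfl (by field_simp; ring) (by field_simp; ring)]
  refine PosDef.conjTranspose_mul_mul_same (PosDef.diagonal fun i => ?_)
    (mulVec_injective_of_isUnit (isUnit_unitUpperBidiag4 _ _ _))
  fin_cases i <;> simp <;> positivity

theorem Complex.norm_exp_ofReal_mul_I_sub_one_sq (θ : ℝ) :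
    ‖Complex.exp (θ * Complex.I) - 1‖ ^ 2 = 2 - 2 * Real.cos θ := by
  rw [mul_comm, Complex.norm_exp_I_mul_ofReal_sub_one, Real.norm_eq_abs, sq_abs, mul_pow,
    Real.sin_sq_eq_half_sub, mul_div_cancel₀ _ two_ne_zero]
  ring

theorem norm_sq_one_div_exp_four_pi_div_five_sub_one :
    ‖1 / (Complex.exp (4 * Real.pi * Complex.I / 5) - 1)‖ ^ 2 = (5 - √5) / 10 := by
  have hcos : Real.cos (4 * Real.pi / 5) = -((1 + √5) / 4) := by
    rw [show 4 * Real.pi / 5 = Real.pi - Real.pi / 5 by ring, Real.cos_pi_sub,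
      Real.cos_pi_div_five]
  have h := Complex.norm_exp_ofReal_mul_I_sub_one_sq (4 * Real.pi / 5)
  push_cast at h
  rw [show 4 * (Real.pi : ℂ) / 5 * Complex.I = 4 * Real.pi * Complex.I / 5 by ring, hcos] at h
  rw [norm_div, norm_one, div_pow, one_pow, h, show 2 - 2 * -((1 + √5) / 4) = (5 + √5) / 2 by ring,
    one_div_div, div_eq_div_iff (by positivity) (by norm_num)]
  linear_combination Real.sq_sqrt (show (0 : ℝ) ≤ 5 by norm_num)

/-- The Galois conjugate of the Hermitian form for `𝒞(G₃₀,5)`: with `z = e^{4πi/5}`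
and `φ = (1-√5)/2`, the matrix is positive definite. -/
theorem g30_conjugate_form_posdef
    (z : ℂ) (hz : z = Complex.exp (4 * Real.pi * Complex.I / 5))
    (φ : ℂ) (hφ : φ = (1 - Real.sqrt 5) / 2)
    (H : Matrix (Fin 4) (Fin 4) ℂ)
    (hH : H = !![1, 1/(z-1), 0, 0;
                 1/((starRingEnd ℂ) z - 1), 1, 1/(z-1), 0;
                 0, 1/((starRingEnd ℂ) z - 1), 1, φ/(z-1);
                 0, 0, (starRingEnd ℂ) (φ/(z-1)), 1]) :
    H.PosDef := by
  have hH' : H = unitHermTridiag4 (1 / (z - 1)) (1 / (z - 1)) (φ / (z - 1)) := by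
    simp only [hH, unitHermTridiag4, map_div₀, map_one, map_sub]
  have ht : ‖1 / (z - 1)‖ ^ 2 = (5 - √5) / 10 := hz ▸ norm_sq_one_div_exp_four_pi_div_five_sub_one
  have hφ_real : φ = ((1 - √5) / 2 : ℝ) := by rw [hφ]; push_cast; rfl
  have hφt : ‖φ / (z - 1)‖ ^ 2 = ((1 - √5) / 2) ^ 2 * ((5 - √5) / 10) := by
    rw [div_eq_mul_one_div φ, norm_mul, mul_pow, ht, hφ_real, Complex.norm_real,
      Real.norm_eq_abs, sq_abs]
  have h5 : √5 ^ 2 = 5 := Real.sq_sqrt (by norm_num)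
  have h5_gt : 2 < √5 := by nlinarith [Real.sqrt_nonneg 5]
  rw [hH']
  refine posDef_unitHermTridiag4 _ _ _ ?_ ?_ ?_ <;> simp only [ht, hφt] <;> nlinarith
end

section
/- Let z = e^{2πi/3} and φ = (1+√5)/2. The 4×4 Hermitian matrix with ones on the diagonal, H_{12} = H_{23} = 1/(z-1), H_{34} = φ/(z-1), other off-diagonal entries zero, has signature (3,1), while the Galois conjugate obtained by replacing φ with (1-√5)/2 is positive definite. -/
/-!
With `a = 1/(z-1)` one has `|a|² = 1/3`, and an `LDLᴴ` decomposition, `Lᴴ` unit upper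
bidiagonal, shows that the form is congruent to `diag(1, 2/3, 1/2, 1 - 2r²/3)`, `r` being the
coefficient of `H₃₄`. Since `r² = r + 1` for both roots of `x² = x + 1`, the last pivot is
`∓√5/3`; for `r = (1-√5)/2` this is positive definiteness. For `r = (1+√5)/2` the determinant is
negative, so an odd number of eigenvalues are negative; a second decomposition shows that `3 - H`
is positive definite, so every eigenvalue is below `3`, and as they sum to `tr H = 4`, three of
them cannot be negative.
-/

open Matrix
open scoped ComplexOrder

/-- A Hermitian matrix has signature `(p, n)` if it has `p` positive and `n`
negative eigenvalues (counted with multiplicity). -/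
def HasSignature {m : ℕ} (M : Matrix (Fin m) (Fin m) ℂ) (p n : ℕ) : Prop :=
  ∃ hM : M.IsHermitian,
    (Finset.univ.filter fun i => 0 < hM.eigenvalues i).card = p ∧
    (Finset.univ.filter fun i => hM.eigenvalues i < 0).card = n

open ComplexConjugate

lemma IsPrimitiveRoot.sub_one_mul_conj_sub_one {z : ℂ} (hz : IsPrimitiveRoot z 3) :
    (z - 1) * (conj z - 1) = 3 := by
  have hnorm : z * conj z = 1 := by
    rw [Complex.mul_conj, Complex.normSq_eq_norm_sq, hz.norm'_eq_one (by norm_num)]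
    norm_num
  have hsum : 1 + z + z ^ 2 = 0 := by
    simpa [Finset.sum_range_succ] using hz.geom_sum_eq_zero (by norm_num)
  linear_combination (1 - z ^ 2) * hnorm - hsum + conj z * hz.pow_eq_one

namespace Finset

lemma odd_card_filter_neg_of_prod_neg {ι : Type*} (s : Finset ι) (f : ι → ℝ)
    (h : ∏ i ∈ s, f i < 0) : Odd #{i ∈ s | f i < 0} := by
  have hsign : ∏ i ∈ s, f i = (-1) ^ #{i ∈ s | f i < 0} * ∏ i ∈ s, |f i| := by
    calc ∏ i ∈ s, f i = ∏ i ∈ s, (if f i < 0 then -1 else 1) * |f i| :=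
          prod_congr rfl fun i _ => by
            split_ifs with hi
            · simp [abs_of_neg hi]
            · simp [abs_of_nonneg (not_lt.1 hi)]
      _ = _ := by rw [prod_mul_distrib, prod_ite, prod_const, prod_const_one, mul_one]
  by_contra heven
  rw [Nat.not_odd_iff_even.1 heven |>.neg_one_pow, one_mul] at hsign
  exact h.not_ge (hsign ▸ prod_nonneg fun i _ => abs_nonneg (f i))

lemma sum_le_card_filter_nonneg_mul {ι : Type*} (s : Finset ι) (f : ι → ℝ) {c : ℝ}
    (h : ∀ i ∈ s, f i ≤ c) : ∑ i ∈ s, f i ≤ #{i ∈ s | 0 ≤ f i} * c := by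
  rw [← sum_filter_add_sum_filter_not s (fun i => 0 ≤ f i)]
  have hnonneg : ∑ i ∈ s with 0 ≤ f i, f i ≤ #{i ∈ s | 0 ≤ f i} * c := by
    simpa using sum_le_card_nsmul _ _ c fun i hi => h i (mem_filter.1 hi).1
  have hneg : ∑ i ∈ s with ¬ 0 ≤ f i, f i ≤ 0 :=
    sum_nonpos fun i hi => (not_le.1 (mem_filter.1 hi).2).le
  linarith

end Finset

namespace Matrix

lemma posDef_conjTranspose_mul_diagonal_mul {n : Type*} [Fintype n] [DecidableEq n]
    (U : Matrix n n ℂ) (hU : IsUnit U.det) {d : n → ℝ} (hd : ∀ i, 0 < d i) :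
    (Uᴴ * diagonal (fun i => (d i : ℂ)) * U).PosDef :=
  (PosDef.diagonal fun i => Complex.zero_lt_real.2 (hd i)).conjTranspose_mul_mul_same
    (mulVec_injective_iff_isUnit.2 ((isUnit_iff_isUnit_det U).2 hU))

lemma IsHermitian.eigenvalues_le_of_posSemidef_sub {𝕜 n : Type*} [RCLike 𝕜] [Fintype n]
    [DecidableEq n] {A : Matrix n n 𝕜} (hA : A.IsHermitian) {c : ℝ}
    (h : ((c : 𝕜) • 1 - A).PosSemidef) (i : n) : hA.eigenvalues i ≤ c := by
  have hv : star ⇑(hA.eigenvectorBasis i) ⬝ᵥ ⇑(hA.eigenvectorBasis i) = 1 := by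
    rw [dotProduct_comm, ← EuclideanSpace.inner_eq_star_dotProduct]
    simp
  have hquad := h.re_dotProduct_nonneg (hA.eigenvectorBasis i)
  rw [sub_mulVec, smul_mulVec, one_mulVec, dotProduct_sub, dotProduct_smul, hv, map_sub,
    ← hA.eigenvalues_eq] at hquad
  simpa using hquad

open Finset in
lemma IsHermitian.hasSignature_of_det_neg {n : ℕ} {M : Matrix (Fin n) (Fin n) ℂ}
    (hM : M.IsHermitian) {c : ℝ} (hc : 0 < c) (hle : ((c : ℂ) • 1 - M).PosSemidef)
    (htrace : ((n : ℝ) - 3) * c < M.trace.re) (hdet : M.det.re < 0) :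
    HasSignature M (n - 1) 1 := by
  set μ := hM.eigenvalues
  have hsum : ∑ i, μ i = M.trace.re := by simp [μ, hM.trace_eq_sum_eigenvalues]
  have hprod : ∏ i, μ i < 0 := by
    have hdet' : M.det = ((∏ i, μ i : ℝ) : ℂ) := by
      rw [hM.det_eq_prod_eigenvalues]; push_cast; rfl
    rwa [hdet', Complex.ofReal_re] at hdet
  have hne : ∀ i, μ i ≠ 0 := fun i => prod_ne_zero_iff.1 hprod.ne i (mem_univ i)
  obtain ⟨k, hodd⟩ := odd_card_filter_neg_of_prod_neg univ μ hprod
  have hnonneg : (n : ℝ) - 3 < #{i | 0 ≤ μ i} := by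
    have := sum_le_card_filter_nonneg_mul univ μ fun i _ =>
      hM.eigenvalues_le_of_posSemidef_sub hle i
    exact lt_of_mul_lt_mul_right (by linarith) hc.le
  have hnonneg' : n < #{i | 0 ≤ μ i} + 3 := by
    have : (n : ℝ) < (#{i | 0 ≤ μ i} + 3 : ℕ) := by push_cast; linarith
    exact_mod_cast this
  have hpos : filter (fun i => 0 < μ i) univ = filter (fun i => 0 ≤ μ i) univ :=
    filter_congr fun i _ => (hne i).symm.le_iff_lt.symm
  have hcard := card_filter_add_card_filter_not (s := univ) fun i => μ i < 0
  simp only [not_lt, card_univ, Fintype.card_fin] at hcard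
  refine ⟨hM, ?_, ?_⟩
  · change #{i | 0 < μ i} = n - 1
    rw [hpos]; omega
  · change #{i | μ i < 0} = 1
    omega

end Matrix

noncomputable def g30Form (a : ℂ) (r : ℝ) : Matrix (Fin 4) (Fin 4) ℂ :=
  !![1, a, 0, 0; conj a, 1, a, 0; 0, conj a, 1, r * a; 0, 0, r * conj a, 1]

def unitUpperBidiagonal (x y w : ℂ) : Matrix (Fin 4) (Fin 4) ℂ :=
  !![1, x, 0, 0; 0, 1, y, 0; 0, 0, 1, w; 0, 0, 0, 1]

lemma det_unitUpperBidiagonal (x y w : ℂ) : (unitUpperBidiagonal x y w).det = 1 := by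
  simp [unitUpperBidiagonal, det_succ_row_zero, Fin.sum_univ_succ]

lemma isHermitian_g30Form (a : ℂ) (r : ℝ) : (g30Form a r).IsHermitian := by
  ext i j
  fin_cases i <;> fin_cases j <;> simp [g30Form]

lemma trace_g30Form (a : ℂ) (r : ℝ) : (g30Form a r).trace = 4 := by
  simp [g30Form, trace, Fin.sum_univ_four]
  norm_num

section LDL

variable {a : ℂ} (ha : a * conj a = 1 / 3) (r : ℝ)
include ha

lemma g30Form_eq_ldl :
    g30Form a r = (unitUpperBidiagonal a (3 / 2 * a) (2 * r * a))ᴴ *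
      diagonal (fun i => ((![1, 2 / 3, 1 / 2, 1 - 2 * r ^ 2 / 3] i : ℝ) : ℂ)) *
      unitUpperBidiagonal a (3 / 2 * a) (2 * r * a) := by
  have ha0 : a ≠ 0 := by rintro rfl; norm_num at ha
  have hconj : conj a = (3 * a)⁻¹ := eq_inv_of_mul_eq_one_left (by linear_combination 3 * ha)
  ext i j
  fin_cases i <;> fin_cases j <;>
    simp [g30Form, unitUpperBidiagonal, mul_apply, Fin.sum_univ_four, map_ofNat, hconj] <;>
    field_simp <;> ring

lemma three_smul_one_sub_g30Form_eq_ldl :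
    (3 : ℂ) • 1 - g30Form a r =
      (unitUpperBidiagonal (-a / 2) (-6 / 11 * a) (-11 / 20 * r * a))ᴴ *
      diagonal (fun i => ((![2, 11 / 6, 20 / 11, 2 - 11 * r ^ 2 / 60] i : ℝ) : ℂ)) *
      unitUpperBidiagonal (-a / 2) (-6 / 11 * a) (-11 / 20 * r * a) := by
  have ha0 : a ≠ 0 := by rintro rfl; norm_num at ha
  have hconj : conj a = (3 * a)⁻¹ := eq_inv_of_mul_eq_one_left (by linear_combination 3 * ha)
  ext i j
  fin_cases i <;> fin_cases j <;>
    simp [g30Form, unitUpperBidiagonal, mul_apply, Fin.sum_univ_four, map_ofNat, hconj,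
      one_apply] <;>
    field_simp <;> ring

lemma det_g30Form : (g30Form a r).det = ((1 - 2 * r ^ 2 / 3) / 3 : ℝ) := by
  rw [g30Form_eq_ldl ha, det_mul, det_mul, det_conjTranspose, det_unitUpperBidiagonal,
    det_diagonal, Fin.prod_univ_four]
  simp
  ring

lemma posDef_g30Form (hr : 2 * r ^ 2 < 3) : (g30Form a r).PosDef := by
  rw [g30Form_eq_ldl ha]
  refine posDef_conjTranspose_mul_diagonal_mul _ (by simp [det_unitUpperBidiagonal]) fun i => ?_
  fin_cases i <;> simp
  linarith

lemma hasSignature_g30Form (hneg : 3 < 2 * r ^ 2) (hbound : 11 * r ^ 2 < 120) :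
    HasSignature (g30Form a r) 3 1 := by
  refine (isHermitian_g30Form a r).hasSignature_of_det_neg (n := 4) (c := 3) (by norm_num)
    ?_ (by simp [trace_g30Form]; norm_num) (by rw [det_g30Form ha, Complex.ofReal_re]; linarith)
  rw [Complex.ofReal_ofNat, three_smul_one_sub_g30Form_eq_ldl ha]
  refine (posDef_conjTranspose_mul_diagonal_mul _ (by simp [det_unitUpperBidiagonal])
    fun i => ?_).posSemidef
  fin_cases i <;> simp
  linarith

end LDL

/-- The Hermitian form for `𝒞(G₃₀,3)`: with `z = e^{2πi/3}` and `φ = (1+√5)/2` it has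
signature `(3,1)`, while the Galois conjugate with `φ` replaced by `(1-√5)/2` is
positive definite. -/
theorem g30_form_signature
    (z : ℂ) (hz : z = Complex.exp (2 * Real.pi * Complex.I / 3))
    (H : ℂ → Matrix (Fin 4) (Fin 4) ℂ)
    (hH : ∀ φ : ℂ, H φ =
      !![1, 1/(z-1), 0, 0;
         1/((starRingEnd ℂ) z - 1), 1, 1/(z-1), 0;
         0, 1/((starRingEnd ℂ) z - 1), 1, φ/(z-1);
         0, 0, (starRingEnd ℂ) (φ/(z-1)), 1]) :
    HasSignature (H ((1 + Real.sqrt 5) / 2)) 3 1 ∧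
    (H ((1 - Real.sqrt 5) / 2)).PosDef := by
  have hz3 : IsPrimitiveRoot z 3 := by
    subst hz; exact_mod_cast Complex.isPrimitiveRoot_exp 3 (by norm_num)
  have ha : 1 / (z - 1) * conj (1 / (z - 1)) = 1 / 3 := by
    rw [map_div₀, map_one, map_sub, map_one, div_mul_div_comm, one_mul,
      hz3.sub_one_mul_conj_sub_one]
  have hH_eq : ∀ r : ℝ, H r = g30Form (1 / (z - 1)) r := fun r => by
    rw [hH]
    ext i j
    fin_cases i <;> fin_cases j <;> simp [g30Form, map_div₀] <;> ring
  have hφ : ((1 + Real.sqrt 5) / 2 : ℂ) = (Real.goldenRatio : ℂ) := by simp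
  have hψ : ((1 - Real.sqrt 5) / 2 : ℂ) = (Real.goldenConj : ℂ) := by simp
  rw [hφ, hψ, hH_eq, hH_eq]
  refine ⟨hasSignature_g30Form ha _ ?_ ?_, posDef_g30Form ha _ ?_⟩ <;>
    nlinarith [Real.goldenRatio_sq, Real.goldenConj_sq, Real.one_lt_goldenRatio,
      Real.goldenRatio_lt_two, Real.goldenConj_neg]
end

section
/- If Q·U(w₁,t₁)·Q^{-1} = U(w₂,t₂) for some isometry Q of H of the block-triangular form above (with scaling parameter α > 0), then w₂^*Kw₂ = α²·w₁^*Kw₁; consequently, if w₁^*K₁w₁ is a nonzero integer, a vertical translation length t₁' is a nonzero integer, while after conjugation w₂^*Kw₂ ∈ ℤ and t₂' ∈ √3·ℤ, then the scaling factor λ = α² satisfies both λ ∈ ℚ and λ·t₁' ∈ √3·ℤ \ {0}, which is a contradiction (λ ∈ ℚ and λ ∉ ℚ). -/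
open Matrix
open scoped ComplexOrder

/-- Index type for the block decomposition `1 + 2 + 1` of `ℂ⁴`. -/
abbrev Idx : Type := Unit ⊕ Fin 2 ⊕ Unit

/-- The parabolic matrix `P(B,w,t) = [[1, -w^*KB, -½w^*Kw+it],[0,B,w],[0,0,1]]`. -/
noncomputable def heisP (K B : Matrix (Fin 2) (Fin 2) ℂ) (w : Fin 2 → ℂ) (t : ℝ) :
    Matrix Idx Idx ℂ :=
  fun i j => match i, j with
  | Sum.inl _, Sum.inl _ => 1
  | Sum.inl _, Sum.inr (Sum.inl b) => -(Matrix.vecMul (star w) (K * B) b)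
  | Sum.inl _, Sum.inr (Sum.inr _) =>
      -(1/2) * (star w ⬝ᵥ K.mulVec w) + (t : ℂ) * Complex.I
  | Sum.inr (Sum.inl a), Sum.inr (Sum.inl b) => B a b
  | Sum.inr (Sum.inl a), Sum.inr (Sum.inr _) => w a
  | Sum.inr (Sum.inr _), Sum.inr (Sum.inr _) => 1
  | _, _ => 0

/-- The Heisenberg translation `U(w,t) = P(Id,w,t)`. -/
noncomputable def heisU (K : Matrix (Fin 2) (Fin 2) ℂ) (w : Fin 2 → ℂ) (t : ℝ) :
    Matrix Idx Idx ℂ :=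
  heisP K 1 w t

/-- The block-triangular isometry `Q = [[α, -αv^*KC, -½αv^*Kv+is],[0,C,v],[0,0,1/α]]`. -/
noncomputable def heisQ (K C : Matrix (Fin 2) (Fin 2) ℂ) (v : Fin 2 → ℂ) (α s : ℝ) :
    Matrix Idx Idx ℂ :=
  fun i j => match i, j with
  | Sum.inl _, Sum.inl _ => (α : ℂ)
  | Sum.inl _, Sum.inr (Sum.inl b) => -(α : ℂ) * Matrix.vecMul (star v) (K * C) b
  | Sum.inl _, Sum.inr (Sum.inr _) =>
      -(1/2) * (α : ℂ) * (star v ⬝ᵥ K.mulVec v) + (s : ℂ) * Complex.I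
  | Sum.inr (Sum.inl a), Sum.inr (Sum.inl b) => C a b
  | Sum.inr (Sum.inl a), Sum.inr (Sum.inr _) => v a
  | Sum.inr (Sum.inr _), Sum.inr (Sum.inr _) => 1 / (α : ℂ)
  | _, _ => 0

/-! Comparing the last columns of `Q U(w₁,t₁) = U(w₂,t₂) Q` in the middle block gives
`w₂ = α C w₁`, and since `C` preserves the form `K` this yields `w₂^*Kw₂ = α² w₁^*Kw₁`. For vertical
translations the top right entries give `t₂' = α² t₁'`. With nonzero integral horizontal norms on
both sides `α²` is rational, so `t₂' = α² t₁'` would make `√3` rational. -/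

namespace Matrix

variable {n R : Type*} [Fintype n] [CommRing R]

/-- A conjugate `A B A⁻¹` can only be nonzero when `A` is invertible, since otherwise `A⁻¹ = 0`. -/
theorem mul_eq_mul_of_mul_mul_nonsing_inv_eq [DecidableEq n] {A B C : Matrix n n R}
    (h : A * B * A⁻¹ = C) (hC : C ≠ 0) : A * B = C * A := by
  have hA : IsUnit A.det := by
    by_contra hA
    rw [nonsing_inv_apply_not_isUnit _ hA, Matrix.mul_zero] at h
    exact hC h.symm
  rw [← h, Matrix.mul_assoc, nonsing_inv_mul _ hA, Matrix.mul_one]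

theorem star_mulVec_dotProduct_mulVec_mulVec [StarRing R] {K C : Matrix n n R}
    (hC : Cᴴ * K * C = K) (w : n → R) :
    star (C *ᵥ w) ⬝ᵥ K *ᵥ (C *ᵥ w) = star w ⬝ᵥ K *ᵥ w := by
  rw [star_mulVec, mulVec_mulVec, dotProduct_mulVec, vecMul_vecMul, ← Matrix.mul_assoc, hC,
    ← dotProduct_mulVec]

end Matrix

theorem star_ofReal_smul_dotProduct_mulVec {n : Type*} [Fintype n] (K : Matrix n n ℂ) (α : ℝ)
    (w : n → ℂ) :
    star ((α : ℂ) • w) ⬝ᵥ K *ᵥ ((α : ℂ) • w) = ((α ^ 2 : ℝ) : ℂ) * (star w ⬝ᵥ K *ᵥ w) := by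
  rw [star_smul, mulVec_smul, smul_dotProduct, dotProduct_smul, smul_smul, smul_eq_mul,
    Complex.star_def, Complex.conj_ofReal]
  push_cast
  ring

theorem heisU_ne_zero (K : Matrix (Fin 2) (Fin 2) ℂ) (w : Fin 2 → ℂ) (t : ℝ) :
    heisU K w t ≠ 0 := fun h => by
  simpa [heisU, heisP] using congrFun (congrFun h (Sum.inl ())) (Sum.inl ())

section Intertwining

variable {K C : Matrix (Fin 2) (Fin 2) ℂ} {v : Fin 2 → ℂ} {α s : ℝ}

theorem heisQ_mul_heisU_apply_inr_inl_inr (w : Fin 2 → ℂ) (t : ℝ) (a : Fin 2) :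
    (heisQ K C v α s * heisU K w t) (.inr (.inl a)) (.inr (.inr ())) = (C *ᵥ w) a + v a := by
  fin_cases a <;>
    simp [Matrix.mul_apply, Fintype.sum_sum_type, heisQ, heisU, heisP, mulVec, dotProduct]

theorem heisU_mul_heisQ_apply_inr_inl_inr (w : Fin 2 → ℂ) (t : ℝ) (a : Fin 2) :
    (heisU K w t * heisQ K C v α s) (.inr (.inl a)) (.inr (.inr ())) = v a + w a / α := by
  fin_cases a <;>
    simp [Matrix.mul_apply, Fintype.sum_sum_type, heisQ, heisU, heisP, Matrix.one_apply,
      div_eq_mul_inv]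

theorem heisQ_mul_heisU_zero_apply_inl_inr (t : ℝ) :
    (heisQ K C v α s * heisU K 0 t) (.inl ()) (.inr (.inr ())) =
      α * (t * Complex.I) + heisQ K C v α s (.inl ()) (.inr (.inr ())) := by
  simp [Matrix.mul_apply, Fintype.sum_sum_type, heisQ, heisU, heisP]

theorem heisU_zero_mul_heisQ_apply_inl_inr (t : ℝ) :
    (heisU K 0 t * heisQ K C v α s) (.inl ()) (.inr (.inr ())) =
      heisQ K C v α s (.inl ()) (.inr (.inr ())) + t * Complex.I / α := by
  simp [Matrix.mul_apply, Fintype.sum_sum_type, heisQ, heisU, heisP, div_eq_mul_inv]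

theorem eq_smul_mulVec_of_heisQ_mul_heisU (hα : α ≠ 0) {w₁ w₂ : Fin 2 → ℂ} {t₁ t₂ : ℝ}
    (h : heisQ K C v α s * heisU K w₁ t₁ = heisU K w₂ t₂ * heisQ K C v α s) :
    w₂ = (α : ℂ) • C *ᵥ w₁ := by
  funext a
  have h := congrFun (congrFun h (.inr (.inl a))) (.inr (.inr ()))
  rw [heisQ_mul_heisU_apply_inr_inl_inr, heisU_mul_heisQ_apply_inr_inl_inr] at h
  have hα' : (α : ℂ) ≠ 0 := Complex.ofReal_ne_zero.mpr hα
  field_simp at h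
  simp only [Pi.smul_apply, smul_eq_mul]
  linear_combination -h

theorem eq_sq_mul_of_heisQ_mul_heisU_zero (hα : α ≠ 0) {t₁ t₂ : ℝ}
    (h : heisQ K C v α s * heisU K 0 t₁ = heisU K 0 t₂ * heisQ K C v α s) :
    t₂ = α ^ 2 * t₁ := by
  have h := congrFun (congrFun h (.inl ())) (.inr (.inr ()))
  rw [heisQ_mul_heisU_zero_apply_inl_inr, heisU_zero_mul_heisQ_apply_inl_inr] at h
  have hα' : (α : ℂ) ≠ 0 := Complex.ofReal_ne_zero.mpr hα
  have hI : (t₂ : ℂ) * Complex.I = ((α ^ 2 * t₁ : ℝ) : ℂ) * Complex.I := by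
    field_simp at h
    push_cast
    linear_combination -h
  exact_mod_cast mul_right_cancel₀ Complex.I_ne_zero hI

end Intertwining

theorem rat_mul_int_ne_sqrt_three_mul_int (q : ℚ) (k : ℤ) {l : ℤ} (hl : l ≠ 0) :
    (q : ℝ) * k ≠ √3 * l := fun h => by
  have hl' : (l : ℝ) ≠ 0 := Int.cast_ne_zero.mpr hl
  refine Nat.prime_three.irrational_sqrt ⟨q * k / l, ?_⟩
  push_cast
  rw [h]
  field_simp

theorem cusp_incommensurability_general (K : Matrix (Fin 2) (Fin 2) ℂ)
    (C : Matrix (Fin 2) (Fin 2) ℂ) (hC : Cᴴ * K * C = K)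
    (v : Fin 2 → ℂ) (α s : ℝ) (hα : 0 < α)
    (w₁ w₂ : Fin 2 → ℂ) (t₁ t₂ : ℝ)
    (h₁ : heisQ K C v α s * heisU K w₁ t₁ * (heisQ K C v α s)⁻¹ = heisU K w₂ t₂) :
    star w₂ ⬝ᵥ K.mulVec w₂ = ((α ^ 2 : ℝ) : ℂ) * (star w₁ ⬝ᵥ K.mulVec w₁) ∧
    (∀ t₁' t₂' : ℝ,
      heisQ K C v α s * heisU K 0 t₁' * (heisQ K C v α s)⁻¹ = heisU K 0 t₂' →
      (∃ n : ℤ, n ≠ 0 ∧ star w₁ ⬝ᵥ K.mulVec w₁ = (n : ℂ)) →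
      (∃ n : ℤ, n ≠ 0 ∧ t₁' = (n : ℝ)) →
      (∃ n : ℤ, star w₂ ⬝ᵥ K.mulVec w₂ = (n : ℂ)) →
      (∃ n : ℤ, n ≠ 0 ∧ t₂' = Real.sqrt 3 * (n : ℝ)) →
      False) := by
  have hw : w₂ = (α : ℂ) • C *ᵥ w₁ := eq_smul_mulVec_of_heisQ_mul_heisU hα.ne'
    (mul_eq_mul_of_mul_mul_nonsing_inv_eq h₁ (heisU_ne_zero K w₂ t₂))
  have hnorm : star w₂ ⬝ᵥ K *ᵥ w₂ = ((α ^ 2 : ℝ) : ℂ) * (star w₁ ⬝ᵥ K *ᵥ w₁) := by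
    rw [hw, star_ofReal_smul_dotProduct_mulVec, star_mulVec_dotProduct_mulVec_mulVec hC]
  refine ⟨hnorm, ?_⟩
  rintro t₁' t₂' h' ⟨n, hn, hn_eq⟩ ⟨k, -, rfl⟩ ⟨m, hm_eq⟩ ⟨l, hl, rfl⟩
  have hvert : √3 * l = α ^ 2 * k := eq_sq_mul_of_heisQ_mul_heisU_zero hα.ne'
    (mul_eq_mul_of_mul_mul_nonsing_inv_eq h' (heisU_ne_zero K 0 _))
  have hmn : α ^ 2 * n = (m : ℝ) := by
    rw [hnorm, hn_eq] at hm_eq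
    exact_mod_cast hm_eq
  have hα_sq : α ^ 2 = ((m / n : ℚ) : ℝ) := by
    have hn' : (n : ℝ) ≠ 0 := Int.cast_ne_zero.mpr hn
    push_cast
    rw [← hmn]
    field_simp
  exact rat_mul_int_ne_sqrt_three_mul_int _ k hl (hα_sq ▸ hvert.symm)

/-- If `Q U(w₁,t₁) Q⁻¹ = U(w₂,t₂)` then `w₂^*Kw₂ = α² w₁^*Kw₁`; consequently the
incommensurability data (integral horizontal norms and vertical lengths on one side,
integral horizontal norms and vertical lengths in `√3·ℤ` on the other) is
contradictory. -/
theorem cusp_incommensurability (K : Matrix (Fin 2) (Fin 2) ℂ) (hK : K.PosDef)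
    (C : Matrix (Fin 2) (Fin 2) ℂ) (hC : Cᴴ * K * C = K)
    (v : Fin 2 → ℂ) (α s : ℝ) (hα : 0 < α)
    (w₁ w₂ : Fin 2 → ℂ) (t₁ t₂ : ℝ)
    (h₁ : heisQ K C v α s * heisU K w₁ t₁ * (heisQ K C v α s)⁻¹ = heisU K w₂ t₂) :
    star w₂ ⬝ᵥ K.mulVec w₂ = ((α ^ 2 : ℝ) : ℂ) * (star w₁ ⬝ᵥ K.mulVec w₁) ∧
    (∀ t₁' t₂' : ℝ,
      heisQ K C v α s * heisU K 0 t₁' * (heisQ K C v α s)⁻¹ = heisU K 0 t₂' →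
      (∃ n : ℤ, n ≠ 0 ∧ star w₁ ⬝ᵥ K.mulVec w₁ = (n : ℂ)) →
      (∃ n : ℤ, n ≠ 0 ∧ t₁' = (n : ℝ)) →
      (∃ n : ℤ, star w₂ ⬝ᵥ K.mulVec w₂ = (n : ℂ)) →
      (∃ n : ℤ, n ≠ 0 ∧ t₂' = Real.sqrt 3 * (n : ℝ)) →
      False) :=
  cusp_incommensurability_general K C hC v α s hα w₁ w₂ t₁ t₂ h₁
end

section
/- Let z = e^{2πi/p}, w = e^{2πi/q}. Then for integers p, q ≥ 2 with (p,q) ≠ (2,2), (z+w)/(z+w-1-zw) is a positive real number equal to cos(π/p - π/q)/(2 sin(π/p) sin(π/q)). -/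
private lemma key_num (x y : ℂ) :
    Complex.exp (2*x*Complex.I) + Complex.exp (2*y*Complex.I)
      = 2 * Complex.exp ((x+y)*Complex.I) * Complex.cos (x-y) := by
  rw [Complex.cos, show (2*x*Complex.I) = x*Complex.I + x*Complex.I by ring,
    show (2*y*Complex.I) = y*Complex.I + y*Complex.I by ring,
    show ((x+y)*Complex.I) = x*Complex.I + y*Complex.I by ring,
    show ((x-y)*Complex.I) = x*Complex.I + -(y*Complex.I) by ring,
    show (-(x-y)*Complex.I) = -(x*Complex.I) + y*Complex.I by ring]
  simp only [Complex.exp_add, Complex.exp_neg]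
  have hu : Complex.exp (x*Complex.I) ≠ 0 := Complex.exp_ne_zero _
  have hv : Complex.exp (y*Complex.I) ≠ 0 := Complex.exp_ne_zero _
  field_simp

private lemma key_den (x y : ℂ) :
    Complex.exp (2*x*Complex.I) + Complex.exp (2*y*Complex.I) - 1
      - Complex.exp (2*x*Complex.I) * Complex.exp (2*y*Complex.I)
      = 4 * Complex.exp ((x+y)*Complex.I) * Complex.sin x * Complex.sin y := by
  rw [Complex.sin, Complex.sin, show (2*x*Complex.I) = x*Complex.I + x*Complex.I by ring,
    show (2*y*Complex.I) = y*Complex.I + y*Complex.I by ring,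
    show ((x+y)*Complex.I) = x*Complex.I + y*Complex.I by ring,
    show (-x*Complex.I) = -(x*Complex.I) by ring,
    show (-y*Complex.I) = -(y*Complex.I) by ring]
  simp only [Complex.exp_add, Complex.exp_neg]
  have hu : Complex.exp (x*Complex.I) ≠ 0 := Complex.exp_ne_zero _
  have hv : Complex.exp (y*Complex.I) ≠ 0 := Complex.exp_ne_zero _
  field_simp
  ring_nf
  simp [Complex.I_sq]
  ring

/-- For `z = e^{2πi/p}`, `w = e^{2πi/q}` with `p, q ≥ 2` not both 2, the quantity
`(z+w)/(z+w-1-zw)` is a positive real number, equal to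
`cos(π/p - π/q) / (2 sin(π/p) sin(π/q))`. -/
theorem beta_squared_real_positive (p q : ℕ) (hp : 2 ≤ p) (hq : 2 ≤ q)
    (hpq : ¬(p = 2 ∧ q = 2))
    (z w : ℂ) (hz : z = Complex.exp (2 * Real.pi * Complex.I / p))
    (hw : w = Complex.exp (2 * Real.pi * Complex.I / q)) :
    (z + w) / (z + w - 1 - z * w) =
      ((Real.cos (Real.pi / p - Real.pi / q) /
        (2 * Real.sin (Real.pi / p) * Real.sin (Real.pi / q)) : ℝ) : ℂ) ∧
    0 < Real.cos (Real.pi / p - Real.pi / q) /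
        (2 * Real.sin (Real.pi / p) * Real.sin (Real.pi / q)) := by
  have hpR : (2:ℝ) ≤ p := by exact_mod_cast hp
  have hqR : (2:ℝ) ≤ q := by exact_mod_cast hq
  have hp0 : (0:ℝ) < p := by linarith
  have hq0 : (0:ℝ) < q := by linarith
  set a : ℝ := Real.pi / p with ha
  set b : ℝ := Real.pi / q with hb
  have ha0 : 0 < a := div_pos Real.pi_pos hp0
  have hb0 : 0 < b := div_pos Real.pi_pos hq0
  have ha2 : a ≤ Real.pi / 2 := by
    apply div_le_div_of_nonneg_left Real.pi_pos.le (by norm_num) hpR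
  have hb2 : b ≤ Real.pi / 2 := by
    apply div_le_div_of_nonneg_left Real.pi_pos.le (by norm_num) hqR
  have hsa : 0 < Real.sin a :=
    Real.sin_pos_of_pos_of_lt_pi ha0 (by linarith [Real.pi_pos])
  have hsb : 0 < Real.sin b :=
    Real.sin_pos_of_pos_of_lt_pi hb0 (by linarith [Real.pi_pos])
  have hc : 0 < Real.cos (a - b) := by
    apply Real.cos_pos_of_mem_Ioo
    rw [Set.mem_Ioo]
    constructor <;> linarith
  refine ⟨?_, div_pos hc (by positivity)⟩
  have hzc : z = Complex.exp (2*(a:ℂ)*Complex.I) := by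
    rw [hz, ha]; congr 1; push_cast; ring
  have hwc : w = Complex.exp (2*(b:ℂ)*Complex.I) := by
    rw [hw, hb]; congr 1; push_cast; ring
  rw [hzc, hwc, key_den, key_num]
  have hE : Complex.exp (((a:ℂ)+b)*Complex.I) ≠ 0 := Complex.exp_ne_zero _
  have hca : Complex.sin (a:ℂ) ≠ 0 := by
    rw [← Complex.ofReal_sin]; exact_mod_cast hsa.ne'
  have hcb : Complex.sin (b:ℂ) ≠ 0 := by
    rw [← Complex.ofReal_sin]; exact_mod_cast hsb.ne'
  push_cast [Complex.ofReal_cos, Complex.ofReal_sin]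
  field_simp
  ring
end
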